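/- arXiv:1404.1557 — 3 statements merged into one kernel-verified Lean document; each statement's English description precedes it below -/
import Mathlib

section
/- Let (m_n) be a strictly increasing sequence of positive integers with counting function f(n) = #{k : m_k ≤ n}. Then the series ∑ 1/m_n converges if and only if the series ∑ f(n)/n² converges. -/
open scoped ENNReal NNReal

/-- Tail sum lower bound: `1/(4M) ≤ ∑_{n ≥ M} 1/n²` in `ℝ≥0∞`. -/
lemma aux_tail_lower (M : ℕ) (hM : 1 ≤ M) :
    (4 : ℝ≥0∞)⁻¹ * (M : ℝ≥0∞)⁻¹ ≤ ∑' n : ℕ, (if M ≤ n then ((n : ℝ≥0∞) ^ 2)⁻¹ else 0) := by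
  have hM0 : (M : ℝ≥0∞) ≠ 0 := by exact_mod_cast Nat.cast_ne_zero.mpr (by omega)
  have hsum : ∑ n ∈ Finset.Ico M (2 * M), (if M ≤ n then ((n : ℝ≥0∞) ^ 2)⁻¹ else 0)
      ≤ ∑' n : ℕ, (if M ≤ n then ((n : ℝ≥0∞) ^ 2)⁻¹ else 0) :=
    ENNReal.sum_le_tsum _
  refine le_trans ?_ hsum
  have hbound : ∀ n ∈ Finset.Ico M (2 * M),
      (((2 * M : ℕ) : ℝ≥0∞) ^ 2)⁻¹ ≤ (if M ≤ n then ((n : ℝ≥0∞) ^ 2)⁻¹ else 0) := by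
    intro n hn
    rw [Finset.mem_Ico] at hn
    rw [if_pos hn.1]
    apply ENNReal.inv_le_inv.mpr
    have h1 : (n : ℝ≥0∞) ≤ ((2 * M : ℕ) : ℝ≥0∞) := by exact_mod_cast hn.2.le
    exact pow_le_pow_left' h1 2
  calc (4 : ℝ≥0∞)⁻¹ * (M : ℝ≥0∞)⁻¹
      ≤ (M : ℝ≥0∞) * (((2 * M : ℕ) : ℝ≥0∞) ^ 2)⁻¹ := by
        have h1 : (((2 * M : ℕ) : ℝ≥0∞) ^ 2) = (4 * (M : ℝ≥0∞)) * (M : ℝ≥0∞) := by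
          push_cast; ring
        rw [h1, ENNReal.mul_inv (by left; exact mul_ne_zero (by norm_num) hM0)
            (by left; exact ENNReal.mul_ne_top (by norm_num) (by simp))]
        rw [ENNReal.mul_inv (by norm_num) (by norm_num)]
        rw [← mul_assoc, mul_comm (M : ℝ≥0∞), mul_assoc, mul_assoc,
          ENNReal.mul_inv_cancel hM0 (by simp)]
        simp
    _ ≤ ∑ n ∈ Finset.Ico M (2 * M), (if M ≤ n then ((n : ℝ≥0∞) ^ 2)⁻¹ else 0) := by
        have h2 := Finset.card_nsmul_le_sum (Finset.Ico M (2 * M)) _ _ hbound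
        rw [Nat.card_Ico, nsmul_eq_mul] at h2
        have h3 : 2 * M - M = M := by omega
        rwa [h3] at h2

/-- Tail sum upper bound: `∑_{n ≥ M} 1/n² ≤ 2/M` in `ℝ≥0∞`. -/
lemma aux_tail_upper (M : ℕ) (hM : 1 ≤ M) :
    (∑' n : ℕ, (if M ≤ n then ((n : ℝ≥0∞) ^ 2)⁻¹ else 0)) ≤ 2 * (M : ℝ≥0∞)⁻¹ := by
  refine Summable.tsum_le_of_sum_le ENNReal.summable ?_
  intro s
  have hterm : ∀ n : ℕ, M ≤ n → (((n : ℝ≥0∞)) ^ 2)⁻¹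
      = ENNReal.ofReal (((n : ℝ) ^ 2)⁻¹) := by
    intro n h
    have hn : (0:ℝ) < (n:ℝ) := by exact_mod_cast lt_of_lt_of_le hM h
    have h1 : ((n : ℝ≥0∞)) ^ 2 = ENNReal.ofReal ((n : ℝ) ^ 2) := by
      rw [ENNReal.ofReal_pow (by positivity), ENNReal.ofReal_natCast]
    rw [h1, ← ENNReal.ofReal_inv_of_pos (by positivity)]
  have h2M : 2 * (M : ℝ≥0∞)⁻¹ = ENNReal.ofReal (2 / (M : ℝ)) := by
    rw [ENNReal.ofReal_div_of_pos (by exact_mod_cast hM), ENNReal.div_eq_inv_mul]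
    norm_num [mul_comm, ENNReal.ofReal_natCast]
  calc ∑ n ∈ s, (if M ≤ n then ((n : ℝ≥0∞) ^ 2)⁻¹ else 0)
      = ENNReal.ofReal (∑ n ∈ s, (if M ≤ n then ((n : ℝ) ^ 2)⁻¹ else 0)) := by
        rw [ENNReal.ofReal_sum_of_nonneg (fun n _ => by positivity)]
        refine Finset.sum_congr rfl fun n _ => ?_
        by_cases h : M ≤ n
        · rw [if_pos h, if_pos h, hterm n h]
        · simp [h]
    _ ≤ ENNReal.ofReal (2 / (M : ℝ)) := by
        apply ENNReal.ofReal_le_ofReal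
        have hsub : ∑ n ∈ s, (if M ≤ n then ((n : ℝ) ^ 2)⁻¹ else 0)
            ≤ ∑ n ∈ Finset.Ioo (M - 1) (s.sup id + 1), ((n : ℝ) ^ 2)⁻¹ := by
          rw [← Finset.sum_filter]
          apply Finset.sum_le_sum_of_subset_of_nonneg
          · intro n hn
            rw [Finset.mem_filter] at hn
            rw [Finset.mem_Ioo]
            refine ⟨by omega, ?_⟩
            have := Finset.le_sup (f := id) hn.1
            simpa using Nat.lt_succ_of_le this
          · intro i _ _; positivity
        refine hsub.trans ?_
        have h3 := sum_Ioo_inv_sq_le (α := ℝ) (M - 1) (s.sup id + 1)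
        have hcast : ((M - 1 : ℕ) : ℝ) + 1 = (M : ℝ) := by
          have h4 : M - 1 + 1 = M := Nat.succ_pred_eq_of_pos hM
          exact_mod_cast congrArg (Nat.cast : ℕ → ℝ) h4
        rwa [hcast] at h3
    _ = 2 * (M : ℝ≥0∞)⁻¹ := h2M.symm

/-- The counting-function criterion: for a strictly increasing sequence of positive
integers `m` with counting function `f`, `∑ 1/mₙ` converges iff `∑ f(n)/n²` converges. -/
theorem counting_function_criterion
    (m : ℕ → ℕ) (hm : StrictMono m) (hpos : ∀ n, 1 ≤ m n)
    (f : ℕ → ℕ)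
    (hf : ∀ n, f n = ((Finset.range (n + 1)).filter (fun k => m k ≤ n)).card) :
    Summable (fun n : ℕ => (1 : ℝ) / m n) ↔
      Summable (fun n : ℕ => (f n : ℝ) / (n : ℝ) ^ 2) := by
  have hmk : ∀ k, k + 1 ≤ m k := by
    intro k
    induction k with
    | zero => exact hpos 0
    | succ k ih => exact Nat.succ_le_of_lt (lt_of_le_of_lt ih (hm (Nat.lt_succ_self k)))
  have key : (∑' n : ℕ, (f n : ℝ≥0∞) * ((n : ℝ≥0∞) ^ 2)⁻¹)
      = ∑' k : ℕ, ∑' n : ℕ, (if m k ≤ n then ((n : ℝ≥0∞) ^ 2)⁻¹ else 0) := by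
    have hcong : ∀ n : ℕ, (f n : ℝ≥0∞) * ((n : ℝ≥0∞) ^ 2)⁻¹
        = ∑' k : ℕ, (if m k ≤ n then ((n : ℝ≥0∞) ^ 2)⁻¹ else 0) := by
      intro n
      have hsupp : ∀ k ∉ Finset.range (n + 1),
          (if m k ≤ n then ((n : ℝ≥0∞) ^ 2)⁻¹ else 0) = 0 := by
        intro k hk
        rw [Finset.mem_range, not_lt] at hk
        have := hmk k
        rw [if_neg (by omega)]
      rw [tsum_eq_sum hsupp, ← Finset.sum_filter, Finset.sum_const, hf n, nsmul_eq_mul]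
    rw [tsum_congr hcong, ENNReal.tsum_comm]
  have hB_le : (∑' n : ℕ, (f n : ℝ≥0∞) * ((n : ℝ≥0∞) ^ 2)⁻¹)
      ≤ 2 * ∑' k : ℕ, ((m k : ℝ≥0∞))⁻¹ := by
    rw [key, ← ENNReal.tsum_mul_left]
    exact ENNReal.tsum_le_tsum fun k => aux_tail_upper (m k) (hpos k)
  have hA_le : (∑' k : ℕ, ((m k : ℝ≥0∞))⁻¹)
      ≤ 4 * ∑' n : ℕ, (f n : ℝ≥0∞) * ((n : ℝ≥0∞) ^ 2)⁻¹ := by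
    rw [key, ← ENNReal.tsum_mul_left]
    refine ENNReal.tsum_le_tsum fun k => ?_
    have h := aux_tail_lower (m k) (hpos k)
    calc ((m k : ℝ≥0∞))⁻¹ = 4 * ((4 : ℝ≥0∞)⁻¹ * ((m k : ℝ≥0∞))⁻¹) := by
          rw [← mul_assoc, ENNReal.mul_inv_cancel (by norm_num) (by norm_num), one_mul]
      _ ≤ 4 * ∑' n : ℕ, (if m k ≤ n then ((n : ℝ≥0∞) ^ 2)⁻¹ else 0) :=
          mul_le_mul_right h 4
  have hAiff : Summable (fun n : ℕ => (1 : ℝ) / m n)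
      ↔ (∑' k : ℕ, ((m k : ℝ≥0∞))⁻¹) ≠ ∞ := by
    set g : ℕ → ℝ≥0 := fun n => (m n : ℝ≥0)⁻¹ with hg
    have h1 : (fun n : ℕ => (1 : ℝ) / m n) = fun n : ℕ => ((g n : ℝ≥0) : ℝ) := by
      funext n; rw [hg]; push_cast; rw [one_div]
    have h2 : ∀ k : ℕ, ((g k : ℝ≥0) : ℝ≥0∞) = ((m k : ℝ≥0∞))⁻¹ := by
      intro k
      rw [hg]
      simp only []
      rw [ENNReal.coe_inv (Nat.cast_ne_zero.mpr (by have := hpos k; omega))]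
      norm_cast
    rw [h1, NNReal.summable_coe, ← ENNReal.tsum_coe_ne_top_iff_summable, tsum_congr h2]
  have hBiff : Summable (fun n : ℕ => (f n : ℝ) / (n : ℝ) ^ 2)
      ↔ (∑' n : ℕ, (f n : ℝ≥0∞) * ((n : ℝ≥0∞) ^ 2)⁻¹) ≠ ∞ := by
    set g : ℕ → ℝ≥0 := fun n => (f n : ℝ≥0) / (n : ℝ≥0) ^ 2 with hg
    have h1 : (fun n : ℕ => (f n : ℝ) / (n : ℝ) ^ 2)
        = fun n : ℕ => ((g n : ℝ≥0) : ℝ) := by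
      funext n; rw [hg]; push_cast; ring
    have h2 : ∀ n : ℕ, ((g n : ℝ≥0) : ℝ≥0∞)
        = (f n : ℝ≥0∞) * ((n : ℝ≥0∞) ^ 2)⁻¹ := by
      intro n
      rw [hg]
      simp only []
      rcases Nat.eq_zero_or_pos n with h | h
      · subst h
        have hf0 : f 0 = 0 := by
          rw [hf 0]
          apply Finset.card_eq_zero.mpr
          apply Finset.filter_eq_empty_iff.mpr
          intro k _
          simp only [Nat.le_zero]
          have := hpos k; omega
        simp [hf0]
      · rw [ENNReal.coe_div (by positivity), div_eq_mul_inv]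
        norm_cast
    rw [h1, NNReal.summable_coe, ← ENNReal.tsum_coe_ne_top_iff_summable, tsum_congr h2]
  rw [hAiff, hBiff]
  constructor
  · intro h
    exact ne_top_of_le_ne_top (ENNReal.mul_ne_top (by norm_num) h) hB_le
  · intro h
    exact ne_top_of_le_ne_top (ENNReal.mul_ne_top (by norm_num) h) hA_le
end

section
/- Roth's theorem in the density form: if f(n) denotes the maximal size of a 3-AP-free subset of {1,...,n}, then lim_{n→∞} f(n)/n = 0. -/
/-!
Every 3-AP-free subset of `{1, …, n}` is a translate of a 3-AP-free subset of `{0, …, n - 1}`,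
so `f n` is at most the Roth number `rothNumberNat n`, which is `o(n)` by Roth's theorem.
-/

open Finset

theorem threeAPFree_iff_not_exists_ap {s : Set ℕ} :
    ThreeAPFree s ↔ ¬ ∃ a d : ℕ, d ≠ 0 ∧ a ∈ s ∧ a + d ∈ s ∧ a + 2 * d ∈ s := by
  constructor
  · rintro hs ⟨a, d, hd, ha, had, ha2d⟩
    exact hd (by simpa using hs ha had ha2d (by ring))
  · refine fun hs ↦ threeAPFree_iff_eq_right.2 fun a ha b hb c hc habc ↦ ?_
    rcases lt_trichotomy a c with hac | rfl | hca
    · exact (hs ⟨a, b - a, by omega, ha, by rwa [show a + (b - a) = b by omega],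
        by rwa [show a + 2 * (b - a) = c by omega]⟩).elim
    · rfl
    · exact (hs ⟨c, b - c, by omega, hc, by rwa [show c + (b - c) = b by omega],
        by rwa [show c + 2 * (b - c) = a by omega]⟩).elim

theorem ThreeAPFree.card_le_rothNumberNat_of_subset_Icc {A : Finset ℕ} {n : ℕ}
    (hA : ThreeAPFree (A : Set ℕ)) (hAn : (A : Set ℕ) ⊆ Set.Icc 1 n) :
    #A ≤ rothNumberNat n := by
  have hAIco : A ⊆ Ico 1 (n + 1) := fun x hx ↦ by
    simpa [Nat.lt_succ_iff] using hAn hx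
  simpa using hA.le_addRothNumber hAIco |>.trans_eq (addRothNumber_Ico 1 (n + 1))

/-- Roth's theorem, density form: the maximal size of a 3-AP-free subset of `{1,…,n}`
is `o(n)`. -/
theorem roth_density_form
    (f : ℕ → ℕ)
    (hf : ∀ n : ℕ, IsGreatest
      {k : ℕ | ∃ A : Finset ℕ, ↑A ⊆ Set.Icc 1 n ∧
        (¬ ∃ a d : ℕ, d ≠ 0 ∧ a ∈ A ∧ a + d ∈ A ∧ a + 2 * d ∈ A) ∧ A.card = k} (f n)) :
    Filter.Tendsto (fun n : ℕ => (f n : ℝ) / n) Filter.atTop (nhds 0) := by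
  have hf_le : ∀ n, f n ≤ rothNumberNat n := fun n ↦ by
    obtain ⟨A, hAn, hA, hcard⟩ := (hf n).1
    exact hcard ▸ (threeAPFree_iff_not_exists_ap.2 hA).card_le_rothNumberNat_of_subset_Icc hAn
  refine squeeze_zero (fun n ↦ by positivity) (fun n ↦ ?_)
    rothNumberNat_isLittleO_id.tendsto_div_nhds_zero
  gcongr
  exact_mod_cast hf_le n
end

section
/- If A is a set of positive integers with positive upper density, i.e., limsup_{n→∞} |A ∩ {1,...,n}|/n > 0, then A contains a nontrivial three-term arithmetic progression a, a+d, a+2d with d ≠ 0. -/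
open Filter Finset

/-- Roth's theorem: a set of positive integers with positive upper density contains a
nontrivial three-term arithmetic progression. -/
theorem roth_positive_upper_density
    (A : Set ℕ) (hpos : ∀ a ∈ A, 0 < a)
    (h : 0 < Filter.limsup (fun n : ℕ => (Nat.card ↥(A ∩ Set.Icc 1 n) : ℝ) / n)
      Filter.atTop) :
    ∃ a d : ℕ, d ≠ 0 ∧ a ∈ A ∧ a + d ∈ A ∧ a + 2 * d ∈ A := by
  classical
  by_contra hcon
  push_neg at hcon
  -- A is 3AP-free
  have hAPfree : ThreeAPFree A := by
    intro a ha b hb c hc habc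
    by_contra hab
    rcases lt_or_gt_of_ne hab with hlt | hgt
    · have hd : b - a ≠ 0 := by omega
      have h2 : a + 2 * (b - a) = c := by omega
      exact hcon a (b - a) hd ha (by simpa [Nat.add_sub_cancel' hlt.le] using hb)
        (h2 ▸ hc)
    · have hcb : c < b := by omega
      have hd : b - c ≠ 0 := by omega
      have h2 : c + 2 * (b - c) = a := by omega
      exact hcon c (b - c) hd hc (by simpa [Nat.add_sub_cancel' hcb.le] using hb)
        (h2 ▸ ha)
  set f : ℕ → ℝ := fun n : ℕ => (Nat.card ↥(A ∩ Set.Icc 1 n) : ℝ) / n with hf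
  have hnonneg : ∀ n, 0 ≤ f n := fun n => by positivity
  have hbdd : Filter.IsBoundedUnder (· ≥ ·) Filter.atTop f :=
    Filter.isBoundedUnder_of ⟨0, fun x => hnonneg x⟩
  have hcobdd : Filter.IsCoboundedUnder (· ≤ ·) Filter.atTop f :=
    hbdd.isCoboundedUnder_le
  set ε := Filter.limsup f Filter.atTop with hε
  have hfreq : ∃ᶠ n in atTop, ε / 2 < f n :=
    Filter.frequently_lt_of_lt_limsup hcobdd (by linarith)
  obtain ⟨n, hnlt, hn⟩ :=
    (hfreq.and_eventually (Filter.eventually_ge_atTop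
      (max 1 (cornersTheoremBound (ε / 4 / 3))))).exists
  have hn1 : 1 ≤ n := le_trans (le_max_left _ _) hn
  have hnC : cornersTheoremBound (ε / 4 / 3) ≤ n + 1 :=
    Nat.le_succ_of_le (le_trans (le_max_right _ _) hn)
  -- the finset
  set F : Finset ℕ := (Finset.Icc 1 n).filter (· ∈ A) with hF
  have hFeq : A ∩ Set.Icc 1 n = ↑F := by
    ext x; simp only [hF, Finset.coe_filter, Finset.mem_Icc, Set.mem_inter_iff, Set.mem_Icc, Set.mem_setOf_eq]; tauto
  have hcard : (Nat.card ↥(A ∩ Set.Icc 1 n) : ℝ) = (#F : ℝ) := by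
    rw [hFeq]; simp
  have hsub : F ⊆ Finset.range (n + 1) := fun x hx => by
    simp only [hF, Finset.mem_filter, Finset.mem_Icc] at hx
    simp; omega
  have hεpos : 0 < ε := h
  have hcardge : ε / 4 * (n + 1) ≤ (#F : ℝ) := by
    have h1 : ε / 2 * n ≤ (#F : ℝ) := by
      have hnpos : (0 : ℝ) < n := by exact_mod_cast hn1
      have this : ε / 2 < (Nat.card ↥(A ∩ Set.Icc 1 n) : ℝ) / n := hnlt
      rw [lt_div_iff₀ hnpos] at this
      rw [← hcard]; linarith [this]
    have hnn : (n : ℝ) + 1 ≤ 2 * n := by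
      have : (1 : ℝ) ≤ n := by exact_mod_cast hn1
      linarith
    calc ε / 4 * (n + 1) ≤ ε / 4 * (2 * n) := by
          apply mul_le_mul_of_nonneg_left hnn (by positivity)
      _ = ε / 2 * n := by ring
      _ ≤ _ := h1
  have := roth_3ap_theorem_nat (ε / 4) (by positivity) hnC F
    (by exact_mod_cast hsub) (by push_cast; exact_mod_cast hcardge)
  exact this (hAPfree.mono (by rw [← hFeq]; exact Set.inter_subset_left))
end
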